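/- For all a > 0, σ > 0 and γ ∈ (0, 1/(4σ²)], and all t ≥ 0: −2Φ(−t/(2σγ^{1/2}))(e^{at + 2a²σ²γ} − 1) + 2 e^{2a²σ²γ} sinh(at) Φ(−t/(2σγ^{1/2}) + 2σγ^{1/2}a) ≤ 4 e^{2a²σ²γ} σ² a γ (2π)^{−1/2} e^{(a + 2σγ^{1/2}a)²/2}. -/

import Mathlib

/-!
Put `c = 2σ√γ ≤ 1`, `u = t / c` and `h = c a`. Since `exp = cosh + sinh`, the left side equals
`2 Φ(-u) (1 - e^{h²/2} cosh (h u)) + 2 e^{h²/2} sinh (h u) (Φ(-u + h) - Φ(-u))`, whose first summand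
is nonpositive. In the second, the increment of `Φ` is at most `h` times the largest value of the
density on `[-u, -u + h]`, convexity of `sinh` on `[0, ∞)` gives `sinh (h u) ≤ c sinh (a u)`, and
completing the square gives `sinh (a u) e^{-u²/2 + h u} ≤ e^{(a + h)²/2} / 2`.
-/

open MeasureTheory

/-- Standard Gaussian density. -/
noncomputable def stdG (g : ℝ) : ℝ :=
  (Real.sqrt (2 * Real.pi))⁻¹ * Real.exp (-g ^ 2 / 2)

/-- Standard Gaussian cumulative distribution function. -/
noncomputable def Phi (x : ℝ) : ℝ := ∫ u in Set.Iio x, stdG u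

open Real Set

lemma stdG_nonneg (x : ℝ) : 0 ≤ stdG x := by
  unfold stdG; positivity

lemma integrable_stdG : Integrable stdG := by
  have h := (integrable_exp_neg_mul_sq (b := 1 / 2) (by norm_num)).const_mul (√(2 * π))⁻¹
  refine h.congr (ae_of_all _ fun x => ?_)
  simp only [stdG]; ring_nf

lemma Phi_nonneg (x : ℝ) : 0 ≤ Phi x :=
  setIntegral_nonneg measurableSet_Iio fun u _ => stdG_nonneg u

lemma Phi_eq_integral_Iic (x : ℝ) : Phi x = ∫ u in Iic x, stdG u :=
  setIntegral_congr_set Iio_ae_eq_Iic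

lemma Phi_sub_Phi_le {x y M : ℝ} (hxy : x ≤ y) (hM : ∀ z ∈ Icc x y, stdG z ≤ M) :
    Phi y - Phi x ≤ (y - x) * M := by
  rw [Phi_eq_integral_Iic, Phi_eq_integral_Iic, intervalIntegral.integral_Iic_sub_Iic
    integrable_stdG.integrableOn integrable_stdG.integrableOn]
  calc ∫ z in x..y, stdG z ≤ ∫ _ in x..y, M :=
        intervalIntegral.integral_mono_on hxy integrable_stdG.intervalIntegrable
          intervalIntegrable_const hM
    _ = (y - x) * M := by simp

lemma stdG_le_of_mem_Icc {u h z : ℝ} (hu : 0 ≤ u) (hz : z ∈ Icc (-u) (-u + h)) :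
    stdG z ≤ (√(2 * π))⁻¹ * exp (-u ^ 2 / 2 + h * u) := by
  obtain ⟨hz₀, hz₁⟩ := hz
  unfold stdG
  gcongr
  nlinarith [sq_nonneg (z + u), mul_nonneg hu (sub_nonneg.2 hz₁)]

lemma Phi_neg_add_sub_Phi_neg_le {u h : ℝ} (hu : 0 ≤ u) (hh : 0 ≤ h) :
    Phi (-u + h) - Phi (-u) ≤ h * ((√(2 * π))⁻¹ * exp (-u ^ 2 / 2 + h * u)) := by
  simpa using Phi_sub_Phi_le (by linarith) fun z hz => stdG_le_of_mem_Icc hu hz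

lemma convexOn_sinh : ConvexOn ℝ (Ici 0) sinh := by
  refine MonotoneOn.convexOn_of_deriv (convex_Ici 0) continuous_sinh.continuousOn
    differentiable_sinh.differentiableOn ?_
  rw [Real.deriv_sinh, interior_Ici]
  exact cosh_strictMonoOn.monotoneOn.mono Ioi_subset_Ici_self

lemma sinh_mul_le_mul_sinh {c x : ℝ} (hc₀ : 0 ≤ c) (hc₁ : c ≤ 1) (hx : 0 ≤ x) :
    sinh (c * x) ≤ c * sinh x := by
  simpa using convexOn_sinh.2 (mem_Ici.2 hx) (mem_Ici.2 le_rfl) hc₀ (sub_nonneg.2 hc₁)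
    (add_sub_cancel c 1)

lemma sinh_mul_exp_le (a h u : ℝ) :
    sinh (a * u) * exp (-u ^ 2 / 2 + h * u) ≤ exp ((a + h) ^ 2 / 2) / 2 := by
  have hsinh : sinh (a * u) ≤ exp (a * u) / 2 := by
    rw [sinh_eq]; linarith [exp_pos (-(a * u))]
  calc sinh (a * u) * exp (-u ^ 2 / 2 + h * u)
      ≤ exp (a * u) / 2 * exp (-u ^ 2 / 2 + h * u) := by gcongr
    _ = exp (a * u + (-u ^ 2 / 2 + h * u)) / 2 := by rw [Real.exp_add (a * u)]; ring
    _ ≤ exp ((a + h) ^ 2 / 2) / 2 := by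
        gcongr; nlinarith [sq_nonneg (u - (a + h))]

lemma sinh_cdf_remainder_le_of_le_one {a c u h : ℝ} (ha : 0 ≤ a) (hc₀ : 0 ≤ c) (hc₁ : c ≤ 1)
    (hu : 0 ≤ u) (hh : h = c * a) :
    -2 * Phi (-u) * (exp (h * u + h ^ 2 / 2) - 1) +
        2 * exp (h ^ 2 / 2) * sinh (h * u) * Phi (-u + h) ≤
      c * h * exp (h ^ 2 / 2) * (√(2 * π))⁻¹ * exp ((a + h) ^ 2 / 2) := by
  set E := exp (h ^ 2 / 2)
  have hE : 1 ≤ E := one_le_exp (by positivity)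
  have hsplit : -2 * Phi (-u) * (exp (h * u + h ^ 2 / 2) - 1) +
        2 * E * sinh (h * u) * Phi (-u + h) =
      2 * Phi (-u) * (1 - E * cosh (h * u)) +
        2 * E * sinh (h * u) * (Phi (-u + h) - Phi (-u)) := by
    rw [Real.exp_add, ← cosh_add_sinh]; ring
  have hfirst : 2 * Phi (-u) * (1 - E * cosh (h * u)) ≤ 0 :=
    mul_nonpos_of_nonneg_of_nonpos (by linarith [Phi_nonneg (-u)])
      (by nlinarith [one_le_cosh (h * u)])
  have hsinh : sinh (h * u) ≤ c * sinh (a * u) := by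
    rw [hh, mul_assoc]; exact sinh_mul_le_mul_sinh hc₀ hc₁ (mul_nonneg ha hu)
  have hsinh₀ : 0 ≤ sinh (h * u) := sinh_nonneg_iff.2 (by rw [hh]; positivity)
  have hsecond : 2 * E * sinh (h * u) * (Phi (-u + h) - Phi (-u)) ≤
      c * h * E * (√(2 * π))⁻¹ * exp ((a + h) ^ 2 / 2) := by
    have hh₀ : 0 ≤ h := by rw [hh]; positivity
    calc 2 * E * sinh (h * u) * (Phi (-u + h) - Phi (-u))
        ≤ 2 * E * sinh (h * u) * (h * ((√(2 * π))⁻¹ * exp (-u ^ 2 / 2 + h * u))) := by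
          gcongr; exact Phi_neg_add_sub_Phi_neg_le hu hh₀
      _ ≤ 2 * E * (c * sinh (a * u)) * (h * ((√(2 * π))⁻¹ * exp (-u ^ 2 / 2 + h * u))) := by
          gcongr
      _ = 2 * c * h * E * (√(2 * π))⁻¹ * (sinh (a * u) * exp (-u ^ 2 / 2 + h * u)) := by ring
      _ ≤ 2 * c * h * E * (√(2 * π))⁻¹ * (exp ((a + h) ^ 2 / 2) / 2) := by
          gcongr; exact sinh_mul_exp_le a h u
      _ = c * h * E * (√(2 * π))⁻¹ * exp ((a + h) ^ 2 / 2) := by ring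
  linarith

theorem sinh_cdf_remainder_bound (a σ γ t : ℝ)
    (ha : 0 < a) (hσ : 0 < σ) (hγ : γ ∈ Set.Ioc (0 : ℝ) (1 / (4 * σ ^ 2)))
    (ht : 0 ≤ t) :
    -2 * Phi (-(t / (2 * σ * Real.sqrt γ))) *
        (Real.exp (a * t + 2 * a ^ 2 * σ ^ 2 * γ) - 1) +
      2 * Real.exp (2 * a ^ 2 * σ ^ 2 * γ) * Real.sinh (a * t) *
        Phi (-(t / (2 * σ * Real.sqrt γ)) + 2 * σ * Real.sqrt γ * a) ≤
    4 * Real.exp (2 * a ^ 2 * σ ^ 2 * γ) * σ ^ 2 * a * γ *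
      (Real.sqrt (2 * Real.pi))⁻¹ *
      Real.exp ((a + 2 * σ * Real.sqrt γ * a) ^ 2 / 2) := by
  obtain ⟨hγ₀, hγ₁⟩ := hγ
  set c := 2 * σ * √γ
  have hc₀ : 0 < c := by positivity
  have hc_sq : c ^ 2 = 4 * σ ^ 2 * γ := by
    rw [mul_pow, sq_sqrt hγ₀.le]; ring
  have hc₁ : c ≤ 1 := by
    refine (sq_le_one_iff₀ hc₀.le).1 ?_
    rwa [hc_sq, ← le_div_iff₀' (by positivity)]
  have hat : a * t = c * a * (t / c) := by field_simp
  have hexp : 2 * a ^ 2 * σ ^ 2 * γ = (c * a) ^ 2 / 2 := by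
    linear_combination (-a ^ 2 / 2) * hc_sq
  rw [hat, hexp]
  calc _ ≤ _ := sinh_cdf_remainder_le_of_le_one ha.le hc₀.le hc₁ (div_nonneg ht hc₀.le) rfl
    _ = _ := by
      linear_combination a * exp ((c * a) ^ 2 / 2) * (√(2 * π))⁻¹ *
        exp ((a + c * a) ^ 2 / 2) * hc_sq
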